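/- With G, f, L as above, the on-diagonal values of higher derivatives are: ∂²_{xk}L(x,x) = (e^{f(x,x)}/(ς√(2π)))(1/16 + 3/(8ς²) + 3/(2ς⁴)); ∂³_{xxk}L(x,x) = (e^{f(x,x)}/(ς√(2π)))(1/32 + 1/(8ς²)); and (∂⁴_{xxxk} − ∂³_{xxk})L(x,x) = (e^{f(x,x)}/(ς√(2π)))(−1/64 − 5/(32ς²) − 3/(2ς⁴) − 15/(2ς⁶)). -/

import Mathlib

/-- The function `f(x,k)` from the paper. -/
noncomputable def fBS (ς x k : ℝ) : ℝ := (x + k)/2 - (x - k)^2/(2*ς^2) - ς^2/8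

/-- The function `G(x,k) = e^{f(x,k)}/(ς√(2π))`. -/
noncomputable def GBS (ς x k : ℝ) : ℝ := Real.exp (fBS ς x k) / (ς * Real.sqrt (2*Real.pi))

/-- `L := (1/4)∂ₓG + (1/2)∂²_{xk}G`. -/
noncomputable def LBS (ς x k : ℝ) : ℝ :=
  (1/4) * deriv (fun x' => GBS ς x' k) x
    + (1/2) * deriv (fun k' => deriv (fun x' => GBS ς x' k') x) k

/-- `∂ₓL`. -/
noncomputable def LBSx (ς x k : ℝ) : ℝ := deriv (fun x' => LBS ς x' k) x

/-- `∂²ₓL`. -/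
noncomputable def LBSxx (ς x k : ℝ) : ℝ := deriv (fun x' => LBSx ς x' k) x

/-- `∂³ₓL`. -/
noncomputable def LBSxxx (ς x k : ℝ) : ℝ := deriv (fun x' => LBSxx ς x' k) x

/-!
Every function in sight has the form `p(x - k) G(x, k)` with `p` a polynomial: since
`∂ₓ f = 1/2 - u/ς²` and `∂ₖ f = 1/2 + u/ς²` for `u = x - k`, differentiating in `x` or `k` just
replaces `p` by another polynomial. On the diagonal `u = 0`, so each value asked for is the
constant term of an explicitly computable polynomial, times `G(x, x)`.
-/

open Polynomial

section

variable (ς : ℝ)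

theorem hasDerivAt_GBS_left (x k : ℝ) :
    HasDerivAt (fun x' => GBS ς x' k) ((1/2 - (x - k)/ς^2) * GBS ς x k) x := by
  have hf : HasDerivAt (fun x' => fBS ς x' k) (1/2 - (x - k)/ς^2) x :=
    (((((hasDerivAt_id x).add_const k).div_const 2).sub
      ((((hasDerivAt_id x).sub_const k).pow 2).div_const (2*ς^2))).sub_const (ς^2/8)).congr_deriv
      (by simp only [id_eq]; ring)
  exact (hf.exp.div_const _).congr_deriv (by rw [GBS]; ring)

theorem hasDerivAt_GBS_right (x k : ℝ) :
    HasDerivAt (fun k' => GBS ς x k') ((1/2 + (x - k)/ς^2) * GBS ς x k) k := by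
  have hf : HasDerivAt (fun k' => fBS ς x k') (1/2 + (x - k)/ς^2) k :=
    (((((hasDerivAt_id k).const_add x).div_const 2).sub
      ((((hasDerivAt_id k).const_sub x).pow 2).div_const (2*ς^2))).sub_const (ς^2/8)).congr_deriv
      (by simp only [id_eq]; ring)
  exact (hf.exp.div_const _).congr_deriv (by rw [GBS]; ring)

noncomputable def derivXPoly (p : ℝ[X]) : ℝ[X] :=
  derivative p + (C (1/2) - C (ς^2)⁻¹ * X) * p

noncomputable def derivKPoly (p : ℝ[X]) : ℝ[X] :=
  -derivative p + (C (1/2) + C (ς^2)⁻¹ * X) * p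

theorem hasDerivAt_eval_mul_GBS_left (p : ℝ[X]) (x k : ℝ) :
    HasDerivAt (fun x' => p.eval (x' - k) * GBS ς x' k)
      ((derivXPoly ς p).eval (x - k) * GBS ς x k) x := by
  refine (((p.hasDerivAt (x - k)).comp_sub_const x k).mul
    (hasDerivAt_GBS_left ς x k)).congr_deriv ?_
  simp only [derivXPoly, eval_add, eval_mul, eval_sub, eval_C, eval_X]
  ring

theorem hasDerivAt_eval_mul_GBS_right (p : ℝ[X]) (x k : ℝ) :
    HasDerivAt (fun k' => p.eval (x - k') * GBS ς x k')
      ((derivKPoly ς p).eval (x - k) * GBS ς x k) k := by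
  refine (((p.hasDerivAt (x - k)).comp_const_sub x k).mul
    (hasDerivAt_GBS_right ς x k)).congr_deriv ?_
  simp only [derivKPoly, eval_add, eval_mul, eval_neg, eval_C, eval_X]
  ring

noncomputable def LBSPoly : ℝ[X] :=
  C (1/4) * derivXPoly ς 1 + C (1/2) * derivKPoly ς (derivXPoly ς 1)

theorem LBS_eq (x k : ℝ) : LBS ς x k = (LBSPoly ς).eval (x - k) * GBS ς x k := by
  have hGx (x k : ℝ) :
      deriv (fun x' => GBS ς x' k) x = (derivXPoly ς 1).eval (x - k) * GBS ς x k := by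
    simpa using (hasDerivAt_eval_mul_GBS_left ς 1 x k).deriv
  simp only [LBS, hGx, LBSPoly, (hasDerivAt_eval_mul_GBS_right ς _ x k).deriv, eval_add,
    eval_mul, eval_C]
  ring

theorem LBSx_eq (x k : ℝ) :
    LBSx ς x k = (derivXPoly ς (LBSPoly ς)).eval (x - k) * GBS ς x k := by
  simp only [LBSx, LBS_eq]
  exact (hasDerivAt_eval_mul_GBS_left ς _ x k).deriv

theorem LBSxx_eq (x k : ℝ) :
    LBSxx ς x k = (derivXPoly ς (derivXPoly ς (LBSPoly ς))).eval (x - k) * GBS ς x k := by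
  simp only [LBSxx, LBSx_eq]
  exact (hasDerivAt_eval_mul_GBS_left ς _ x k).deriv

theorem LBSxxx_eq (x k : ℝ) :
    LBSxxx ς x k
      = (derivXPoly ς (derivXPoly ς (derivXPoly ς (LBSPoly ς)))).eval (x - k) * GBS ς x k := by
  simp only [LBSxxx, LBSxx_eq]
  exact (hasDerivAt_eval_mul_GBS_left ς _ x k).deriv

end

theorem stmt_7_general (ς : ℝ) (x : ℝ) :
    (deriv (fun k => LBSx ς x k) x
      = Real.exp (fBS ς x x) / (ς * Real.sqrt (2*Real.pi))
        * (1/16 + 3/(8*ς^2) + 3/(2*ς^4))) ∧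
    (deriv (fun k => LBSxx ς x k) x
      = Real.exp (fBS ς x x) / (ς * Real.sqrt (2*Real.pi)) * (1/32 + 1/(8*ς^2))) ∧
    (deriv (fun k => LBSxxx ς x k) x - deriv (fun k => LBSxx ς x k) x
      = Real.exp (fBS ς x x) / (ς * Real.sqrt (2*Real.pi))
        * (-(1/64) - 5/(32*ς^2) - 3/(2*ς^4) - 15/(2*ς^6))) := by
  simp only [LBSx_eq, LBSxx_eq, LBSxxx_eq, (hasDerivAt_eval_mul_GBS_right ς _ x _).deriv,
    sub_self]
  simp only [GBS, derivKPoly, derivXPoly, LBSPoly, derivative_add, derivative_sub,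
    derivative_neg, derivative_mul, derivative_C, derivative_X, derivative_one, eval_add, eval_sub,
    eval_neg, eval_mul, eval_C, eval_X, zero_mul, mul_zero, mul_one, zero_add, add_zero, neg_zero,
    sub_zero, zero_sub]
  refine ⟨?_, ?_, ?_⟩ <;> ring

theorem stmt_7 (ς : ℝ) (hς : 0 < ς) (x : ℝ) :
    (deriv (fun k => LBSx ς x k) x
      = Real.exp (fBS ς x x) / (ς * Real.sqrt (2*Real.pi))
        * (1/16 + 3/(8*ς^2) + 3/(2*ς^4))) ∧
    (deriv (fun k => LBSxx ς x k) x
      = Real.exp (fBS ς x x) / (ς * Real.sqrt (2*Real.pi)) * (1/32 + 1/(8*ς^2))) ∧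
    (deriv (fun k => LBSxxx ς x k) x - deriv (fun k => LBSxx ς x k) x
      = Real.exp (fBS ς x x) / (ς * Real.sqrt (2*Real.pi))
        * (-(1/64) - 5/(32*ς^2) - 3/(2*ς^4) - 15/(2*ς^6))) :=
  stmt_7_general ς x
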